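/- Let G be a countable group, H a nontrivial cyclic group with generator h, and define K : 𝒫(G) → Sg(G*H) by K(A) = ⟨xhx^{-1} : x ∈ A⟩. Then K(A ∩ B) = K(A) ∩ K(B) for all A, B ⊆ G, and K(gA) = gK(A)g^{-1} for all g ∈ G. -/

import Mathlib

/-!
The conjugates `xHx⁻¹`, `x ∈ G`, sit freely inside `G ∗ H`: sending the `x`-th factor of the free
product `∗_{x ∈ G} H` to `xHx⁻¹` is injective, because composed with `G ∗ H → (∗_{x ∈ G} H) ⋊ G`
it becomes the inclusion of the normal factor. So `K(A)` is the image of the subgroup generated by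
the factors indexed by `A`. In a free product that subgroup is the fixed set of the retraction
killing all other factors, and these retractions compose by intersecting index sets, which gives
`K(A ∩ B) = K(A) ⊓ K(B)`. Equivariance under left translation is a computation on generators.
-/

open Monoid

namespace Monoid.CoprodI

variable {ι : Type*} {G : ι → Type*} [∀ i, Group (G i)]

open scoped Classical in
noncomputable def restrict (S : Set ι) : CoprodI G →* CoprodI G :=
  lift fun i => if i ∈ S then of else 1

theorem restrict_of_of_mem {S : Set ι} {i : ι} (hi : i ∈ S) (m : G i) :
    restrict S (of m) = of m := by
  simp [restrict, hi]

theorem restrict_of_of_notMem {S : Set ι} {i : ι} (hi : i ∉ S) (m : G i) :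
    restrict S (of m) = 1 := by
  simp [restrict, hi]

theorem restrict_comp_restrict (S T : Set ι) :
    (restrict (G := G) S).comp (restrict T) = restrict (S ∩ T) := by
  refine ext_hom _ _ fun i => MonoidHom.ext fun m => ?_
  by_cases hT : i ∈ T
  · by_cases hS : i ∈ S
    · simp [restrict_of_of_mem hT, restrict_of_of_mem hS, restrict_of_of_mem (Set.mem_inter hS hT)]
    · simp [restrict_of_of_mem hT, restrict_of_of_notMem hS,
        restrict_of_of_notMem fun h : i ∈ S ∩ T => hS h.1]
  · simp [restrict_of_of_notMem hT, restrict_of_of_notMem fun h : i ∈ S ∩ T => hT h.2]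

theorem restrict_mem_iSup_range_of (S : Set ι) (x : CoprodI G) :
    restrict S x ∈ ⨆ i ∈ S, (of : G i →* CoprodI G).range := by
  suffices (restrict S).range ≤ ⨆ i ∈ S, (of : G i →* CoprodI G).range from this ⟨x, rfl⟩
  rw [restrict, range_eq_iSup]
  refine iSup_le fun i => ?_
  split_ifs with hi
  · exact le_biSup (fun i => (of : G i →* CoprodI G).range) hi
  · simp

theorem restrict_eq_self_of_mem_iSup_range_of {S : Set ι} {x : CoprodI G}
    (hx : x ∈ ⨆ i ∈ S, (of : G i →* CoprodI G).range) : restrict S x = x := by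
  suffices (⨆ i ∈ S, (of : G i →* CoprodI G).range) ≤ (restrict S).eqLocus (.id _) from this hx
  refine iSup₂_le fun i hi => ?_
  rintro _ ⟨m, rfl⟩
  exact restrict_of_of_mem hi m

theorem iSup_range_of_inter (S T : Set ι) :
    ⨆ i ∈ S ∩ T, (of : G i →* CoprodI G).range =
      (⨆ i ∈ S, (of : G i →* CoprodI G).range) ⊓ ⨆ i ∈ T, (of : G i →* CoprodI G).range := by
  refine le_antisymm (le_inf (biSup_mono fun _ => And.left) (biSup_mono fun _ => And.right)) ?_
  rintro x ⟨hS, hT⟩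
  have hx : restrict (S ∩ T) x = x := by
    rw [← restrict_comp_restrict, MonoidHom.comp_apply, restrict_eq_self_of_mem_iSup_range_of hT,
      restrict_eq_self_of_mem_iSup_range_of hS]
  exact hx ▸ restrict_mem_iSup_range_of (S ∩ T) x

end Monoid.CoprodI

namespace Monoid.Coprod

variable {G H : Type*} [Group G] [Group H]

def translateHom (g : G) : (CoprodI fun _ : G => H) →* CoprodI fun _ : G => H :=
  CoprodI.lift fun i => CoprodI.of (M := fun _ : G => H) (i := g * i)

theorem translateHom_of (g i : G) (m : H) :
    translateHom g (CoprodI.of (i := i) m) = CoprodI.of (M := fun _ : G => H) (i := g * i) m :=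
  CoprodI.lift_of (fun i => CoprodI.of (M := fun _ : G => H) (i := g * i)) m

theorem translateHom_mul (g₁ g₂ : G) :
    translateHom (H := H) (g₁ * g₂) = (translateHom g₁).comp (translateHom g₂) :=
  CoprodI.ext_hom _ _ fun i => MonoidHom.ext fun m => by simp [translateHom_of, mul_assoc]

theorem translateHom_one : translateHom (H := H) (1 : G) = .id _ :=
  CoprodI.ext_hom _ _ fun i => MonoidHom.ext fun m => by simp [translateHom_of]

def translate : G →* MulAut (CoprodI fun _ : G => H) where
  toFun g := (translateHom g).toMulEquiv (translateHom g⁻¹)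
    (by rw [← translateHom_mul, inv_mul_cancel, translateHom_one])
    (by rw [← translateHom_mul, mul_inv_cancel, translateHom_one])
  map_one' := MulEquiv.ext fun x => by simp [translateHom_one]
  map_mul' g₁ g₂ := MulEquiv.ext fun x => by simp [translateHom_mul]

theorem translate_of (g i : G) (m : H) :
    translate g (CoprodI.of (i := i) m) = CoprodI.of (M := fun _ : G => H) (i := g * i) m :=
  translateHom_of g i m

def toSemidirect : G ∗ H →* (CoprodI fun _ : G => H) ⋊[translate] G :=
  lift SemidirectProduct.inr
    (SemidirectProduct.inl.comp (CoprodI.of (M := fun _ : G => H) (i := 1)))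

def conjInrHom : (CoprodI fun _ : G => H) →* G ∗ H :=
  CoprodI.lift fun i => (MulAut.conj (inl i)).toMonoidHom.comp inr

theorem toSemidirect_comp_conjInrHom :
    (toSemidirect (G := G) (H := H)).comp conjInrHom = SemidirectProduct.inl := by
  refine CoprodI.ext_hom _ _ fun i => MonoidHom.ext fun m => ?_
  simp only [conjInrHom, MonoidHom.comp_apply, CoprodI.lift_of]
  calc toSemidirect (inl i * inr m * (inl i)⁻¹)
      = .inr i * .inl (CoprodI.of (M := fun _ : G => H) (i := 1) m) * .inr i⁻¹ := by
        simp [toSemidirect]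
    _ = .inl (CoprodI.of (i := i) m) := by rw [← SemidirectProduct.inl_aut, translate_of, mul_one]

theorem conjInrHom_injective : Function.Injective (conjInrHom (G := G) (H := H)) :=
  .of_comp (f := toSemidirect) <| by
    rw [← MonoidHom.coe_comp, toSemidirect_comp_conjInrHom]
    exact SemidirectProduct.inl_injective

theorem map_conjInrHom_range_of (x : G) :
    (CoprodI.of (M := fun _ : G => H) (i := x)).range.map conjInrHom =
      (inr : H →* G ∗ H).range.map (MulAut.conj (inl x)).toMonoidHom := by
  rw [MonoidHom.map_range, MonoidHom.map_range, conjInrHom, CoprodI.lift_comp_of]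

theorem iSup_conj_range_inr_inter (A B : Set G) :
    ⨆ x ∈ A ∩ B, (inr : H →* G ∗ H).range.map (MulAut.conj (inl x)).toMonoidHom =
      (⨆ x ∈ A, (inr : H →* G ∗ H).range.map (MulAut.conj (inl x)).toMonoidHom) ⊓
        ⨆ x ∈ B, (inr : H →* G ∗ H).range.map (MulAut.conj (inl x)).toMonoidHom := by
  simp only [← map_conjInrHom_range_of, ← Subgroup.map_iSup]
  rw [← Subgroup.map_inf _ _ _ conjInrHom_injective, CoprodI.iSup_range_of_inter]

theorem closure_conj_image_eq_iSup_conj_range_inr {h : H}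
    (hgen : ∀ x : H, x ∈ Subgroup.zpowers h) (A : Set G) :
    Subgroup.closure ((fun x : G => inl x * (inr h : G ∗ H) * (inl x)⁻¹) '' A) =
      ⨆ x ∈ A, (inr : H →* G ∗ H).range.map (MulAut.conj (inl x)).toMonoidHom := by
  refine le_antisymm (Subgroup.closure_le _ |>.2 ?_) (iSup₂_le fun x hx => ?_)
  · rintro _ ⟨x, hx, rfl⟩
    exact le_biSup (fun x => (inr : H →* G ∗ H).range.map (MulAut.conj (inl x)).toMonoidHom) hx
      (Subgroup.mem_map_of_mem _ (MonoidHom.mem_range.2 ⟨h, rfl⟩))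
  · rintro _ ⟨_, ⟨m, rfl⟩, rfl⟩
    obtain ⟨k, rfl⟩ := hgen m
    rw [map_zpow, map_zpow]
    exact zpow_mem (Subgroup.subset_closure (Set.mem_image_of_mem _ hx)) k

end Monoid.Coprod

theorem K_intersections_and_conjugates
    (G H : Type) [Group G] [Group H]
    (h : H) (hgen : ∀ x : H, x ∈ Subgroup.zpowers h) :
    let K : Set G → Subgroup (Coprod G H) := fun A =>
      Subgroup.closure
        ((fun x : G => Coprod.inl x * (Coprod.inr h : Coprod G H) * (Coprod.inl x)⁻¹) '' A)
    (∀ A B : Set G, K (A ∩ B) = K A ⊓ K B) ∧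
    (∀ (g : G) (A : Set G),
      K ((fun a => g * a) '' A) =
        Subgroup.map (MulAut.conj (Coprod.inl g : Coprod G H)).toMonoidHom (K A)) := by
  intro K
  refine ⟨fun A B => ?_, fun g A => ?_⟩
  · simp only [K, Coprod.closure_conj_image_eq_iSup_conj_range_inr hgen]
    exact Coprod.iSup_conj_range_inr_inter A B
  · simp only [K, MonoidHom.map_closure, Set.image_image]
    congr! 2 with a
    simp [mul_assoc]
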